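/- Let T be the d-regular rooted tree, D ≥ 1, and P ≤ Aut(T^D) a minimal pattern subgroup. Define K_P = {g ∈ G_P : δ_v(g) ∈ G_P for every vertex v of T} and K̃_P = π_D(K_P). Then: (1) K_P is a subgroup of G_P; (2) St_{G_P}(D−1) ≤ K_P; (3) K_P = {g ∈ G_P : π_D(g) ∈ K̃_P}; (4) [G_P : K_P] = [P : K̃_P]; (5) K_P is the maximal branching subgroup of G_P, i.e. G_P is regular branch over K_P and every subgroup H with H₁ ≤ H ≤ G_P and both [G_P : H] and [H : H₁] finite satisfies H ≤ K_P; (6) K_P is both closed and open in G_P for the congruence topology; (7) K_P is normal in G_P if and only if K̃_P is normal in P; (8) if G_P is fractal then K_P is normal in G_P. -/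

import Mathlib

/-- Removed from Mathlib; restored with the old statement. -/
theorem Equiv.Perm.apply_inv_self {α : Type*} (f : Equiv.Perm α) (x : α) : f (f⁻¹ x) = x :=
  f.apply_symm_apply x

/-- Removed from Mathlib; restored with the old statement. -/
theorem Equiv.Perm.inv_apply_self {α : Type*} (f : Equiv.Perm α) (x : α) : f⁻¹ (f x) = x :=
  f.symm_apply_apply x

namespace TreeFT

/-- Vertices of the `d`-regular rooted tree: finite words over `Fin d`. -/
abbrev Vertex (d : ℕ) := List (Fin d)

/-- The automorphism group of the `d`-regular rooted tree, realized as the subgroup of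
permutations of the vertex set that preserve length (levels) and prefixes (adjacency). -/
def treeAut (d : ℕ) : Subgroup (Equiv.Perm (Vertex d)) where
  carrier := {g | (∀ v : Vertex d, (g v).length = v.length) ∧
      (∀ v w : Vertex d, (g (v ++ w)).take v.length = g v)}
  one_mem' := ⟨fun _ => rfl, fun v w => List.take_left⟩
  mul_mem' := by
    rintro g h ⟨hg1, hg2⟩ ⟨hh1, hh2⟩
    refine ⟨fun v => by rw [Equiv.Perm.mul_apply, hg1, hh1], fun v w => ?_⟩
    have h1 : h (v ++ w) = h v ++ (h (v ++ w)).drop v.length := by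
      conv_lhs => rw [← List.take_append_drop v.length (h (v ++ w))]
      rw [hh2]
    rw [Equiv.Perm.mul_apply, Equiv.Perm.mul_apply, h1]
    have h2 : v.length = (h v).length := (hh1 v).symm
    rw [h2]
    exact hg2 _ _
  inv_mem' := by
    rintro g ⟨hg1, hg2⟩
    constructor
    · intro v
      have h := hg1 (g⁻¹ v)
      rw [Equiv.Perm.apply_inv_self] at h
      exact h.symm
    · intro v w
      apply g.injective
      have hlen : v.length ≤ (g⁻¹ (v ++ w)).length := by
        have h := hg1 (g⁻¹ (v ++ w))
        rw [Equiv.Perm.apply_inv_self] at h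
        rw [← h, List.length_append]
        exact Nat.le_add_right _ _
      have h3 := hg2 ((g⁻¹ (v ++ w)).take v.length) ((g⁻¹ (v ++ w)).drop v.length)
      rw [List.take_append_drop, Equiv.Perm.apply_inv_self, List.length_take,
        min_eq_left hlen, List.take_left] at h3
      rw [← h3, Equiv.Perm.apply_inv_self]

variable {d : ℕ}

/-- `Aut(T)` as a type. -/
abbrev TAut (d : ℕ) := ↥(treeAut d)

lemma length_apply (g : TAut d) (v : Vertex d) :
    ((g : Equiv.Perm (Vertex d)) v).length = v.length := g.2.1 v

lemma take_apply (g : TAut d) (v w : Vertex d) :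
    ((g : Equiv.Perm (Vertex d)) (v ++ w)).take v.length = (g : Equiv.Perm (Vertex d)) v :=
  g.2.2 v w

lemma apply_append (g : TAut d) (v w : Vertex d) :
    (g : Equiv.Perm (Vertex d)) (v ++ w) =
      (g : Equiv.Perm (Vertex d)) v ++ ((g : Equiv.Perm (Vertex d)) (v ++ w)).drop v.length := by
  conv_lhs => rw [← List.take_append_drop v.length ((g : Equiv.Perm (Vertex d)) (v ++ w))]
  rw [take_apply]

/-- The section `g|_v` of a tree automorphism at the vertex `v`. -/
def sect (g : TAut d) (v : Vertex d) : TAut d :=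
  ⟨{ toFun := fun w => ((g : Equiv.Perm (Vertex d)) (v ++ w)).drop v.length
     invFun := fun w =>
       (((g : Equiv.Perm (Vertex d)))⁻¹ ((g : Equiv.Perm (Vertex d)) v ++ w)).drop v.length
     left_inv := by
       intro w
       show ((g : Equiv.Perm (Vertex d))⁻¹
         ((g : Equiv.Perm (Vertex d)) v ++
           ((g : Equiv.Perm (Vertex d)) (v ++ w)).drop v.length)).drop v.length = w
       rw [← apply_append g v w, Equiv.Perm.inv_apply_self, List.drop_left]
     right_inv := by
       intro w
       show ((g : Equiv.Perm (Vertex d))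
         (v ++ ((g : Equiv.Perm (Vertex d))⁻¹
           ((g : Equiv.Perm (Vertex d)) v ++ w)).drop v.length)).drop v.length = w
       have h2 := apply_append g⁻¹ ((g : Equiv.Perm (Vertex d)) v) w
       simp only [InvMemClass.coe_inv] at h2
       rw [Equiv.Perm.inv_apply_self, length_apply] at h2
       rw [← h2, Equiv.Perm.apply_inv_self, ← length_apply g v, List.drop_left] },
   by
    constructor
    · intro w
      simp only [Equiv.coe_fn_mk, List.length_drop, length_apply, List.length_append]
      omega
    · intro w u
      simp only [Equiv.coe_fn_mk]
      rw [← List.append_assoc]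
      have h0 : ((g : Equiv.Perm (Vertex d)) ((v ++ w) ++ u)).take (v ++ w).length
          = (g : Equiv.Perm (Vertex d)) (v ++ w) := take_apply g (v ++ w) u
      have h1 : w.length = (v.length + w.length) - v.length := by omega
      rw [h1, ← List.drop_take, ← List.length_append, h0]⟩

lemma sect_apply (g : TAut d) (v w : Vertex d) :
    ((sect g v : TAut d) : Equiv.Perm (Vertex d)) w
      = ((g : Equiv.Perm (Vertex d)) (v ++ w)).drop v.length := rfl

lemma sect_mul (g h : TAut d) (v : Vertex d) :
    sect (g * h) v = sect g ((h : Equiv.Perm (Vertex d)) v) * sect h v := by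
  apply Subtype.ext
  apply Equiv.ext
  intro w
  simp only [MulMemClass.coe_mul, Equiv.Perm.mul_apply, sect_apply]
  rw [← apply_append h v w, length_apply]

lemma sect_one (v : Vertex d) : sect (1 : TAut d) v = 1 := by
  apply Subtype.ext
  apply Equiv.ext
  intro w
  simp only [sect_apply, OneMemClass.coe_one, Equiv.Perm.coe_one, id_eq]
  exact List.drop_left

end TreeFT
namespace TreeFT

variable {d : ℕ}

/-- The stabilizer `St(n)` of the `n`-th level: automorphisms acting trivially on the first
`n` levels of the tree. -/
def lst (d n : ℕ) : Subgroup (TAut d) where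
  carrier := {g | ∀ v : Vertex d, v.length ≤ n → (g : Equiv.Perm (Vertex d)) v = v}
  one_mem' := fun _ _ => rfl
  mul_mem' := by
    intro g h hg hh v hv
    show (g : Equiv.Perm (Vertex d)) ((h : Equiv.Perm (Vertex d)) v) = v
    rw [hh v hv, hg v hv]
  inv_mem' := by
    intro g hg v hv
    show ((g : Equiv.Perm (Vertex d)))⁻¹ v = v
    apply (g : Equiv.Perm (Vertex d)).injective
    rw [Equiv.Perm.apply_inv_self, hg v hv]

lemma mem_lst {g : TAut d} {n : ℕ} :
    g ∈ lst d n ↔ ∀ v : Vertex d, v.length ≤ n → (g : Equiv.Perm (Vertex d)) v = v :=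
  Iff.rfl

instance lst_normal (d n : ℕ) : (lst d n).Normal := by
  constructor
  intro s hs g v hv
  show (g : Equiv.Perm (Vertex d))
    ((s : Equiv.Perm (Vertex d)) (((g : Equiv.Perm (Vertex d)))⁻¹ v)) = v
  have h1 : ((g⁻¹ : TAut d) : Equiv.Perm (Vertex d)) v = ((g : Equiv.Perm (Vertex d)))⁻¹ v := by
    simp
  have h2 : (((g : Equiv.Perm (Vertex d)))⁻¹ v).length ≤ n := by
    rw [← h1, length_apply]; exact hv
  rw [hs _ h2, Equiv.Perm.apply_inv_self]

/-- `Aut(T^n)`, the automorphism group of the finite tree consisting of the first `n` levels,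
realized as the quotient of `Aut(T)` by the `n`-th level stabilizer. -/
abbrev FAut (d n : ℕ) := TAut d ⧸ lst d n

/-- `π_n : Aut(T) → Aut(T^n)`, restriction to the first `n` levels. -/
def proj (d n : ℕ) : TAut d →* FAut d n := QuotientGroup.mk' (lst d n)

lemma proj_surjective (d n : ℕ) : Function.Surjective (proj d n) :=
  QuotientGroup.mk'_surjective _

/-- The group of finite type `G_P` of depth `D` with pattern group `P ≤ Aut(T^D)`:
all tree automorphisms whose section at every vertex acts on the first `D` levels as an
element of `P`. -/
def gft (d D : ℕ) (P : Subgroup (FAut d D)) : Subgroup (TAut d) where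
  carrier := {g | ∀ v : Vertex d, proj d D (sect g v) ∈ P}
  one_mem' := by
    intro v
    rw [sect_one, map_one]
    exact one_mem P
  mul_mem' := by
    intro g h hg hh v
    rw [sect_mul, map_mul]
    exact mul_mem (hg _) (hh _)
  inv_mem' := by
    intro g hg v
    have h2 : sect g (((g⁻¹ : TAut d) : Equiv.Perm (Vertex d)) v) * sect g⁻¹ v = 1 := by
      rw [← sect_mul, mul_inv_cancel, sect_one]
    have h3 : sect g⁻¹ v = (sect g (((g⁻¹ : TAut d) : Equiv.Perm (Vertex d)) v))⁻¹ :=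
      (inv_eq_of_mul_eq_one_right h2).symm
    rw [h3, map_inv]
    exact inv_mem (hg _)

lemma mem_gft {g : TAut d} {D : ℕ} {P : Subgroup (FAut d D)} :
    g ∈ gft d D P ↔ ∀ v : Vertex d, proj d D (sect g v) ∈ P := Iff.rfl

/-- `P ≤ Aut(T^D)` is a minimal pattern subgroup if `π_D(G_P) = P`. -/
def IsMinimalPattern (d D : ℕ) (P : Subgroup (FAut d D)) : Prop :=
  (gft d D P).map (proj d D) = P

/-- A subgroup of `Aut(T)` is level-transitive if it acts transitively on every level. -/
def LevelTransitive (H : Subgroup (TAut d)) : Prop :=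
  ∀ v w : Vertex d, v.length = w.length → ∃ g ∈ H, (g : Equiv.Perm (Vertex d)) v = w

/-- A subgroup of `Aut(T)` is self-similar if it contains all sections of its elements. -/
def SelfSimilar (H : Subgroup (TAut d)) : Prop :=
  ∀ g ∈ H, ∀ v : Vertex d, sect g v ∈ H

/-- A subgroup of `Aut(T)` is fractal if it is self-similar, level-transitive, and for every
vertex `v` the section map maps the stabilizer of `v` onto the whole group. -/
def Fractal (H : Subgroup (TAut d)) : Prop :=
  SelfSimilar H ∧ LevelTransitive H ∧
    ∀ v : Vertex d, ∀ h ∈ H, ∃ k ∈ H, (k : Equiv.Perm (Vertex d)) v = v ∧ sect k v = h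

/-- The geometric product `K_n` of `K` at level `n`: elements of `St(n)` all of whose sections
at level-`n` vertices lie in `K`. -/
def geom (K : Subgroup (TAut d)) (n : ℕ) : Subgroup (TAut d) where
  carrier := {g | g ∈ lst d n ∧ ∀ v : Vertex d, v.length = n → sect g v ∈ K}
  one_mem' := ⟨one_mem _, fun v _ => by rw [sect_one]; exact one_mem K⟩
  mul_mem' := by
    rintro g h ⟨hg1, hg2⟩ ⟨hh1, hh2⟩
    refine ⟨mul_mem hg1 hh1, fun v hv => ?_⟩
    rw [sect_mul, hh1 v hv.le]
    exact mul_mem (hg2 v hv) (hh2 v hv)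
  inv_mem' := by
    rintro g ⟨hg1, hg2⟩
    refine ⟨inv_mem hg1, fun v hv => ?_⟩
    have hfix : ((g⁻¹ : TAut d) : Equiv.Perm (Vertex d)) v = v :=
      (inv_mem hg1 : g⁻¹ ∈ lst d n) v hv.le
    have h2 : sect g v * sect g⁻¹ v = 1 := by
      have := sect_mul g g⁻¹ v
      rw [mul_inv_cancel, sect_one, hfix] at this
      exact this.symm
    rw [(inv_eq_of_mul_eq_one_right h2).symm]
    exact inv_mem (hg2 v hv)

end TreeFT
namespace TreeFT

variable {d : ℕ}

/-- The congruence topology on `Aut(T)`: the topology of pointwise convergence on the vertex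
set (each vertex set carrying the discrete topology); the level stabilizers `St(n)` form a
base of neighborhoods of the identity for it. -/
instance tautTopologicalSpace (d : ℕ) : TopologicalSpace (TAut d) :=
  TopologicalSpace.induced
    (fun g : TAut d => ((g : Equiv.Perm (Vertex d)) : Vertex d → Vertex d))
    (@Pi.topologicalSpace (Vertex d) (fun _ => Vertex d) (fun _ => ⊥))

lemma isOpen_eval (d : ℕ) (v u : Vertex d) :
    IsOpen {g : TAut d | (g : Equiv.Perm (Vertex d)) v = u} := by
  letI : TopologicalSpace (Vertex d) := ⊥
  haveI : DiscreteTopology (Vertex d) := ⟨rfl⟩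
  have h : IsOpen ((fun f : Vertex d → Vertex d => f v) ⁻¹' {u}) :=
    by
      have h0 := (continuous_apply (A := fun _ : Vertex d => Vertex d) v).isOpen_preimage
        ({u} : Set (Vertex d)) (isOpen_discrete _)
      exact h0
  exact isOpen_induced h

lemma isOpen_eval_mem (d : ℕ) (v : Vertex d) (s : Set (Vertex d)) :
    IsOpen {g : TAut d | (g : Equiv.Perm (Vertex d)) v ∈ s} := by
  have h : {g : TAut d | (g : Equiv.Perm (Vertex d)) v ∈ s}
      = ⋃ u ∈ s, {g : TAut d | (g : Equiv.Perm (Vertex d)) v = u} := by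
    ext g; simp
  rw [h]
  exact isOpen_biUnion fun u _ => isOpen_eval d v u

lemma continuous_into_vertex {X : Type*} [TopologicalSpace X] (f : X → Vertex d)
    (h : ∀ u : Vertex d, IsOpen (f ⁻¹' {u})) :
    @Continuous X (Vertex d) _ ⊥ f := by
  rw [continuous_def]
  intro s _
  have hs : f ⁻¹' s = ⋃ u ∈ s, f ⁻¹' {u} := by
    ext x; simp
  rw [hs]
  exact isOpen_biUnion fun u _ => h u

instance tautContinuousMul (d : ℕ) : ContinuousMul (TAut d) := by
  constructor
  · -- continuity of multiplication
    apply continuous_induced_rng.2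
    apply @continuous_pi _ _ _ _ (fun _ => (⊥ : TopologicalSpace (Vertex d)))
    intro v
    apply continuous_into_vertex
      (f := fun p : TAut d × TAut d => ((p.1 * p.2 : TAut d) : Equiv.Perm (Vertex d)) v)
    intro u
    have h : (fun p : TAut d × TAut d =>
          ((p.1 * p.2 : TAut d) : Equiv.Perm (Vertex d)) v) ⁻¹' {u}
        = ⋃ w : Vertex d, ({g : TAut d | (g : Equiv.Perm (Vertex d)) w = u} ×ˢ
            {h : TAut d | (h : Equiv.Perm (Vertex d)) v = w}) := by
      ext p
      simp only [Set.mem_preimage, Set.mem_singleton_iff, Set.mem_iUnion, Set.mem_prod,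
        Set.mem_setOf_eq]
      constructor
      · intro hp
        exact ⟨(p.2 : Equiv.Perm (Vertex d)) v, hp, rfl⟩
      · rintro ⟨w, hw1, hw2⟩
        show (p.1 : Equiv.Perm (Vertex d)) ((p.2 : Equiv.Perm (Vertex d)) v) = u
        rw [hw2]; exact hw1
    rw [h]
    exact isOpen_iUnion fun w => (isOpen_eval d w u).prod (isOpen_eval d v w)

instance tautContinuousInv (d : ℕ) : ContinuousInv (TAut d) := by
  constructor
  · -- continuity of inversion
    apply continuous_induced_rng.2
    apply @continuous_pi _ _ _ _ (fun _ => (⊥ : TopologicalSpace (Vertex d)))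
    intro v
    apply continuous_into_vertex
      (f := fun g : TAut d => ((g⁻¹ : TAut d) : Equiv.Perm (Vertex d)) v)
    intro u
    have h : (fun g : TAut d => ((g⁻¹ : TAut d) : Equiv.Perm (Vertex d)) v) ⁻¹' {u}
        = {g : TAut d | (g : Equiv.Perm (Vertex d)) u = v} := by
      ext g
      simp only [Set.mem_preimage, Set.mem_singleton_iff, Set.mem_setOf_eq,
        InvMemClass.coe_inv]
      constructor
      · intro hg; rw [← hg, Equiv.Perm.apply_inv_self]
      · intro hg; rw [← hg, Equiv.Perm.inv_apply_self]
    rw [h]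
    exact isOpen_eval d u v

instance tautTopologicalGroup (d : ℕ) : IsTopologicalGroup (TAut d) := ⟨⟩

/-- A subgroup of `Aut(T)` (viewed as a topological group with the congruence topology) is
topologically finitely generated if it contains a finitely generated dense subgroup. -/
def TopFG (H : Subgroup (TAut d)) : Prop :=
  ∃ S : Set ↥H, S.Finite ∧ Dense ((Subgroup.closure S : Subgroup ↥H) : Set ↥H)

/-- A profinite group is just-infinite if it is infinite and every nontrivial closed normal
subgroup has finite index. -/
def JustInfinite (H : Subgroup (TAut d)) : Prop :=
  Infinite ↥H ∧ ∀ N : Subgroup ↥H, N.Normal → IsClosed (N : Set ↥H) → N ≠ ⊥ → N.index ≠ 0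

/-- A profinite group is strongly complete if every subgroup of finite index is open. -/
def StronglyComplete (H : Subgroup (TAut d)) : Prop :=
  ∀ N : Subgroup ↥H, N.index ≠ 0 → IsOpen (N : Set ↥H)

end TreeFT

namespace TreeFT

variable {d : ℕ}

/-- The underlying permutation of `δ_v(g)`: acts as `g` on the subtree rooted at `v` and
fixes every vertex not in that subtree. -/
def deltaPerm (v : Vertex d) (g : TAut d) : Equiv.Perm (Vertex d) where
  toFun w := if v <+: w then v ++ (g : Equiv.Perm (Vertex d)) (w.drop v.length) else w
  invFun w := if v <+: w then v ++ ((g : Equiv.Perm (Vertex d)))⁻¹ (w.drop v.length) else w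
  left_inv := by
    intro w
    by_cases h : v <+: w
    · obtain ⟨t, rfl⟩ := h
      simp only [List.prefix_append, if_pos, List.drop_left, Equiv.Perm.inv_apply_self]
    · simp only [if_neg h]
  right_inv := by
    intro w
    by_cases h : v <+: w
    · obtain ⟨t, rfl⟩ := h
      simp only [List.prefix_append, if_pos, List.drop_left, Equiv.Perm.apply_inv_self]
    · simp only [if_neg h]

lemma deltaPerm_mem (v : Vertex d) (g : TAut d) : deltaPerm v g ∈ treeAut d := by
  constructor
  · intro w
    show (if v <+: w then v ++ (g : Equiv.Perm (Vertex d)) (w.drop v.length) else w).length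
      = w.length
    by_cases h : v <+: w
    · obtain ⟨t, rfl⟩ := h
      rw [if_pos (List.prefix_append v t), List.drop_left, List.length_append,
        List.length_append, length_apply]
    · rw [if_neg h]
  · intro w u
    show (if v <+: w ++ u then v ++ (g : Equiv.Perm (Vertex d)) ((w ++ u).drop v.length)
        else w ++ u).take w.length
      = (if v <+: w then v ++ (g : Equiv.Perm (Vertex d)) (w.drop v.length) else w)
    by_cases hvw : v <+: w
    · obtain ⟨t, rfl⟩ := hvw
      have h1 : v <+: (v ++ t) ++ u := by
        rw [List.append_assoc]; exact List.prefix_append v (t ++ u)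
      rw [if_pos h1, if_pos (List.prefix_append v t), List.drop_left,
        List.append_assoc, List.drop_left]
      rw [apply_append g t u, ← List.append_assoc]
      have h2 : ((v ++ (g : Equiv.Perm (Vertex d)) t)).length = (v ++ t).length := by
        rw [List.length_append, List.length_append, length_apply]
      rw [List.take_left' h2]
    · by_cases hvwu : v <+: w ++ u
      · have hwv : w <+: v := by
          rcases List.prefix_or_prefix_of_prefix hvwu (List.prefix_append w u) with h | h
          · exact absurd h hvw
          · exact h
        obtain ⟨s, rfl⟩ := hwv
        rw [if_pos hvwu, if_neg hvw, List.append_assoc]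
        exact List.take_left
      · rw [if_neg hvwu, if_neg hvw]
        exact List.take_left

/-- `δ_v : Aut(T) → Aut(T)`, the injective homomorphism sending `g` to the automorphism
acting as `g` on the subtree rooted at `v` (so that `δ_v(g)|_v = g`) and fixing every vertex
outside that subtree. -/
def delta (d : ℕ) (v : Vertex d) : TAut d →* TAut d where
  toFun g := ⟨deltaPerm v g, deltaPerm_mem v g⟩
  map_one' := by
    apply Subtype.ext
    apply Equiv.ext
    intro w
    show (if v <+: w then v ++ ((1 : TAut d) : Equiv.Perm (Vertex d)) (w.drop v.length)
        else w) = w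
    by_cases h : v <+: w
    · obtain ⟨t, rfl⟩ := h
      rw [if_pos (List.prefix_append v t), List.drop_left]
      rfl
    · rw [if_neg h]
  map_mul' := by
    intro g h
    apply Subtype.ext
    apply Equiv.ext
    intro w
    show (if v <+: w then
          v ++ ((g * h : TAut d) : Equiv.Perm (Vertex d)) (w.drop v.length) else w)
      = deltaPerm v g (deltaPerm v h w)
    by_cases hw : v <+: w
    · obtain ⟨t, rfl⟩ := hw
      rw [if_pos (List.prefix_append v t), List.drop_left]
      show v ++ (g : Equiv.Perm (Vertex d)) ((h : Equiv.Perm (Vertex d)) t)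
        = deltaPerm v g (deltaPerm v h (v ++ t))
      show v ++ (g : Equiv.Perm (Vertex d)) ((h : Equiv.Perm (Vertex d)) t)
        = deltaPerm v g (if v <+: v ++ t then
            v ++ (h : Equiv.Perm (Vertex d)) ((v ++ t).drop v.length) else v ++ t)
      rw [if_pos (List.prefix_append v t), List.drop_left]
      show _ = (if v <+: v ++ (h : Equiv.Perm (Vertex d)) t then
          v ++ (g : Equiv.Perm (Vertex d))
            ((v ++ (h : Equiv.Perm (Vertex d)) t).drop v.length)
        else v ++ (h : Equiv.Perm (Vertex d)) t)
      rw [if_pos (List.prefix_append v _), List.drop_left]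
    · rw [if_neg hw]
      show _ = deltaPerm v g (if v <+: w then
          v ++ (h : Equiv.Perm (Vertex d)) (w.drop v.length) else w)
      rw [if_neg hw]
      show _ = (if v <+: w then
          v ++ (g : Equiv.Perm (Vertex d)) (w.drop v.length) else w)
      rw [if_neg hw]

end TreeFT

namespace TreeFT

/-- `G` is regular branch over `K`: `K₁ ≤ K ≤ G` with both `[G : K]` and `[K : K₁]` finite. -/
def RegularBranch {d : ℕ} (G K : Subgroup (TAut d)) : Prop :=
  geom K 1 ≤ K ∧ K ≤ G ∧ K.relIndex G ≠ 0 ∧ (geom K 1).relIndex K ≠ 0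

/-- `K_P = {g ∈ G_P : δ_v(g) ∈ G_P for every vertex v}`, the maximal branching subgroup of a
group of finite type. -/
def maxBranching (d D : ℕ) (P : Subgroup (FAut d D)) : Subgroup (TAut d) where
  carrier := {g | g ∈ gft d D P ∧ ∀ v : Vertex d, delta d v g ∈ gft d D P}
  one_mem' := ⟨one_mem _, fun v => by rw [map_one]; exact one_mem _⟩
  mul_mem' := by
    rintro g h ⟨hg1, hg2⟩ ⟨hh1, hh2⟩
    exact ⟨mul_mem hg1 hh1, fun v => by rw [map_mul]; exact mul_mem (hg2 v) (hh2 v)⟩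
  inv_mem' := by
    rintro g ⟨hg1, hg2⟩
    exact ⟨inv_mem hg1, fun v => by rw [map_inv]; exact inv_mem (hg2 v)⟩

/-!
The sections of `δ_v(g)` are sections of `g`, trivial, or `δ_u(g)` for a nonempty word
`u`; for `g ∈ St(D - 1)` the latter lie in `St(D)`, so `St_{G_P}(D - 1) ≤ K_P`. Hence
membership of `g ∈ G_P` in `K_P` only depends on `π_D(g)`: `K_P` is the preimage of `K̃_P` in
`G_P`, which gives the index formula, the clopenness and the normality criterion.

An element of `St(1)` is the product of the `δ_x` of its level-one sections, so `K_P` contains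
its geometric product; and if `H₁ ≤ H ≤ G_P` then `δ_v(h)` lies in the `|v|`-th geometric
product of `H`, which is contained in `H`, so `H ≤ K_P`. If `G_P` is fractal, any `g ∈ G_P`
is the section at `v` of some `c ∈ st_{G_P}(v)`, and `c δ_v(k) c⁻¹ = δ_v(g k g⁻¹)`.
-/

variable {d : ℕ}

lemma normal_subgroupOf_iff_map {G H : Type*} [Group G] [Group H] (f : G →* H)
    {K L : Subgroup G} {M : Subgroup H} (hKL : K ≤ L) (hLM : L.map f = M)
    (hK : ∀ g ∈ L, f g ∈ K.map f → g ∈ K) :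
    (K.subgroupOf L).Normal ↔ ((K.map f).subgroupOf M).Normal := by
  subst hLM
  rw [Subgroup.normal_subgroupOf_iff hKL, Subgroup.normal_subgroupOf_iff (Subgroup.map_mono hKL)]
  constructor
  · rintro h _ _ ⟨k, hk, rfl⟩ ⟨l, hl, rfl⟩
    exact ⟨l * k * l⁻¹, h k l hk hl, by simp⟩
  · intro h k l hk hl
    refine hK _ (mul_mem (mul_mem hl (hKL hk)) (inv_mem hl)) ?_
    simpa using h (f k) (f l) ⟨k, hk, rfl⟩ ⟨l, hl, rfl⟩

section Sections

lemma apply_nil (g : TAut d) : (g : Equiv.Perm (Vertex d)) [] = [] :=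
  List.eq_nil_of_length_eq_zero (length_apply g [])

lemma sect_nil (g : TAut d) : sect g [] = g := by
  ext u : 2
  simp [sect_apply]

lemma sect_sect (g : TAut d) (v w : Vertex d) : sect (sect g v) w = sect g (v ++ w) := by
  ext u : 2
  simp only [sect_apply, List.drop_drop, List.append_assoc, List.length_append]

lemma apply_inv_eq_self {k : TAut d} {v : Vertex d} (hk : (k : Equiv.Perm (Vertex d)) v = v) :
    ((k⁻¹ : TAut d) : Equiv.Perm (Vertex d)) v = v := by
  rw [InvMemClass.coe_inv, Equiv.Perm.inv_eq_iff_eq, hk]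

lemma apply_append_of_apply_eq {k : TAut d} {v : Vertex d}
    (hk : (k : Equiv.Perm (Vertex d)) v = v) (t : Vertex d) :
    (k : Equiv.Perm (Vertex d)) (v ++ t) = v ++ (sect k v : Equiv.Perm (Vertex d)) t :=
  (apply_append k v t).trans (by rw [hk]; rfl)

lemma prefix_of_prefix_apply {k : TAut d} {v w : Vertex d}
    (hk : (k : Equiv.Perm (Vertex d)) v = v) (h : v <+: (k : Equiv.Perm (Vertex d)) w) :
    v <+: w := by
  obtain ⟨t, ht⟩ := h
  refine ⟨(sect k⁻¹ v : Equiv.Perm (Vertex d)) t, ?_⟩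
  rw [← apply_append_of_apply_eq (apply_inv_eq_self hk), ht, InvMemClass.coe_inv,
    Equiv.Perm.inv_apply_self]

end Sections

section Delta

lemma delta_apply (v : Vertex d) (g : TAut d) (w : Vertex d) :
    ((delta d v g : TAut d) : Equiv.Perm (Vertex d)) w
      = if v <+: w then v ++ (g : Equiv.Perm (Vertex d)) (w.drop v.length) else w := rfl

lemma delta_apply_append (v : Vertex d) (g : TAut d) (t : Vertex d) :
    ((delta d v g : TAut d) : Equiv.Perm (Vertex d)) (v ++ t)
      = v ++ (g : Equiv.Perm (Vertex d)) t := by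
  rw [delta_apply, if_pos (List.prefix_append v t), List.drop_left]

lemma delta_apply_of_not_prefix {v w : Vertex d} (g : TAut d) (h : ¬ v <+: w) :
    ((delta d v g : TAut d) : Equiv.Perm (Vertex d)) w = w :=
  if_neg h

lemma sect_delta_append (g : TAut d) (v t : Vertex d) :
    sect (delta d v g) (v ++ t) = sect g t := by
  ext u : 2
  rw [sect_apply, sect_apply, List.append_assoc, delta_apply_append, List.length_append,
    ← List.drop_drop, List.drop_left]

lemma sect_delta_self (g : TAut d) (v : Vertex d) : sect (delta d v g) v = g := by
  simpa [sect_nil] using sect_delta_append g v []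

lemma sect_delta_prefix (g : TAut d) (w v : Vertex d) :
    sect (delta d (w ++ v) g) w = delta d v g := by
  ext u : 2
  rw [sect_apply]
  by_cases h : v <+: u
  · obtain ⟨s, rfl⟩ := h
    rw [← List.append_assoc, delta_apply_append, delta_apply_append, List.append_assoc,
      List.drop_left]
  · rw [delta_apply_of_not_prefix g (by rwa [List.prefix_append_right_inj]),
      delta_apply_of_not_prefix g h, List.drop_left]

lemma sect_delta_of_not_prefix (g : TAut d) {v w : Vertex d} (hvw : ¬ v <+: w)
    (hwv : ¬ w <+: v) : sect (delta d v g) w = 1 := by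
  ext u : 2
  have h : ¬ v <+: w ++ u := fun h =>
    (List.prefix_or_prefix_of_prefix h (List.prefix_append w u)).elim hvw hwv
  rw [sect_apply, delta_apply_of_not_prefix g h, List.drop_left]
  rfl

lemma delta_delta (v u : Vertex d) (g : TAut d) :
    delta d v (delta d u g) = delta d (v ++ u) g := by
  ext w : 2
  by_cases hv : v <+: w
  · obtain ⟨t, rfl⟩ := hv
    rw [delta_apply_append]
    by_cases hu : u <+: t
    · obtain ⟨s, rfl⟩ := hu
      rw [delta_apply_append, ← List.append_assoc v u s, delta_apply_append, List.append_assoc]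
    · rw [delta_apply_of_not_prefix g hu,
        delta_apply_of_not_prefix g (by rwa [List.prefix_append_right_inj])]
  · rw [delta_apply_of_not_prefix _ hv,
      delta_apply_of_not_prefix g fun h => hv ((List.prefix_append v u).trans h)]

lemma mul_delta_of_apply_eq {k : TAut d} {v : Vertex d}
    (hk : (k : Equiv.Perm (Vertex d)) v = v) (h : TAut d) :
    k * delta d v h = delta d v (sect k v * h * (sect k v)⁻¹) * k := by
  ext w : 2
  simp only [MulMemClass.coe_mul, Equiv.Perm.mul_apply]
  by_cases hw : v <+: w
  · obtain ⟨t, rfl⟩ := hw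
    rw [delta_apply_append, apply_append_of_apply_eq hk, apply_append_of_apply_eq hk,
      delta_apply_append]
    simp
  · rw [delta_apply_of_not_prefix h hw,
      delta_apply_of_not_prefix _ fun h' => hw (prefix_of_prefix_apply hk h')]

lemma conj_delta_of_apply_eq {k : TAut d} {v : Vertex d}
    (hk : (k : Equiv.Perm (Vertex d)) v = v) (h : TAut d) :
    k * delta d v h * k⁻¹ = delta d v (sect k v * h * (sect k v)⁻¹) :=
  mul_inv_eq_of_eq_mul (mul_delta_of_apply_eq hk h)

end Delta

section LevelStabilizer

lemma lst_antitone : Antitone (lst d) :=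
  fun _ _ hmn _ hg v hv => hg v (hv.trans hmn)

lemma delta_mem_lst {g : TAut d} {n : ℕ} (hg : g ∈ lst d n) (v : Vertex d) :
    delta d v g ∈ lst d (n + v.length) := by
  intro u hu
  by_cases h : v <+: u
  · obtain ⟨s, rfl⟩ := h
    rw [delta_apply_append, hg s (by rw [List.length_append] at hu; omega)]
  · exact delta_apply_of_not_prefix g h

lemma sect_mem_lst {g : TAut d} {n : ℕ} (hg : g ∈ lst d n) {v : Vertex d}
    (hv : v.length ≤ n) : sect g v ∈ lst d (n - v.length) := by
  intro u hu
  rw [sect_apply, hg (v ++ u) (by rw [List.length_append]; omega), List.drop_left]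

lemma proj_eq_one_iff {g : TAut d} {n : ℕ} : proj d n g = 1 ↔ g ∈ lst d n :=
  QuotientGroup.eq_one_iff g

lemma proj_eq_proj_iff {g h : TAut d} {n : ℕ} :
    proj d n g = proj d n h ↔ g⁻¹ * h ∈ lst d n :=
  QuotientGroup.eq

lemma lst_eq_iInf_stabilizer (n : ℕ) :
    lst d n = ⨅ v : {v : Vertex d // v.length ≤ n}, MulAction.stabilizer (TAut d) v.1 := by
  ext g
  simp [mem_lst, Subgroup.mem_iInf, MulAction.mem_stabilizer_iff, Subgroup.smul_def]

instance lst_finiteIndex (n : ℕ) : (lst d n).FiniteIndex := by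
  have : Finite {v : Vertex d // v.length ≤ n} := (List.finite_length_le (Fin d) n).to_subtype
  rw [lst_eq_iInf_stabilizer]
  refine Subgroup.finiteIndex_iInf fun v => ⟨?_⟩
  have horbit : (MulAction.orbit (TAut d) v.1).Finite :=
    (List.finite_length_eq (Fin d) v.1.length).subset (by
      rintro _ ⟨g, rfl⟩
      exact length_apply g v.1)
  rw [MulAction.index_stabilizer]
  exact ((Set.ncard_pos horbit).mpr (MulAction.nonempty_orbit _)).ne'

lemma isOpen_lst (n : ℕ) : IsOpen (lst d n : Set (TAut d)) := by
  have h : (lst d n : Set (TAut d))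
      = ⋂ v ∈ {v : Vertex d | v.length ≤ n},
          {g : TAut d | (g : Equiv.Perm (Vertex d)) v = v} := by
    ext g
    simp [mem_lst]
  rw [h]
  exact (List.finite_length_le (Fin d) n).isOpen_biInter fun v _ => isOpen_eval d v v

instance fAut_discreteTopology (n : ℕ) : DiscreteTopology (FAut d n) :=
  QuotientGroup.discreteTopology (isOpen_lst n)

lemma isClopen_setOf_proj_mem (n : ℕ) (A : Set (FAut d n)) :
    IsClopen {g : TAut d | proj d n g ∈ A} :=
  (isClopen_discrete A).preimage continuous_quot_mk

end LevelStabilizer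

section GeometricProduct

lemma list_prod_delta_apply_cons (f : Fin d → TAut d) {l : List (Fin d)} (hl : l.Nodup)
    (x : Fin d) (t : Vertex d) :
    (((l.map fun y => delta d [y] (f y)).prod : TAut d) : Equiv.Perm (Vertex d)) (x :: t)
      = if x ∈ l then x :: (f x : Equiv.Perm (Vertex d)) t else x :: t := by
  induction l with
  | nil => simp
  | cons y l ih =>
    rw [List.map_cons, List.prod_cons, MulMemClass.coe_mul, Equiv.Perm.mul_apply,
      ih hl.of_cons]
    by_cases hx : x ∈ l
    · have hxy : y ≠ x := fun h => (List.nodup_cons.mp hl).1 (h ▸ hx)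
      rw [if_pos hx, if_pos (List.mem_cons_of_mem y hx)]
      exact delta_apply_of_not_prefix _ (by simpa using hxy)
    · rw [if_neg hx]
      by_cases hxy : x = y
      · subst hxy
        rw [if_pos List.mem_cons_self]
        exact delta_apply_append [x] (f x) t
      · rw [if_neg (by simp [hx, hxy])]
        exact delta_apply_of_not_prefix _ (by simpa using Ne.symm hxy)

lemma eq_prod_delta_sect_of_mem_lst_one {g : TAut d} (hg : g ∈ lst d 1) :
    g = ((List.finRange d).map fun x => delta d [x] (sect g [x])).prod := by
  ext w : 2
  cases w with
  | nil => rw [apply_nil, apply_nil]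
  | cons x t =>
    rw [list_prod_delta_apply_cons _ (List.nodup_finRange d), if_pos (List.mem_finRange x)]
    exact apply_append_of_apply_eq (hg [x] (by simp)) t

lemma geom_succ_le {H : Subgroup (TAut d)} (hH : geom H 1 ≤ H) (n : ℕ) :
    geom H (n + 1) ≤ geom H n := by
  rintro g ⟨hgl, hgH⟩
  refine ⟨lst_antitone n.le_succ hgl, fun w hw => hH ⟨?_, fun v hv => ?_⟩⟩
  · simpa [hw] using sect_mem_lst hgl (v := w) (by omega)
  · rw [sect_sect]
    exact hgH (w ++ v) (by rw [List.length_append, hw, hv])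

lemma geom_le_self {H : Subgroup (TAut d)} (hH : geom H 1 ≤ H) : ∀ n, geom H n ≤ H
  | 0 => fun g hg => by simpa [sect_nil] using hg.2 [] rfl
  | n + 1 => (geom_succ_le hH n).trans (geom_le_self hH n)

lemma delta_mem_geom {H : Subgroup (TAut d)} {h : TAut d} (hh : h ∈ H) (v : Vertex d) :
    delta d v h ∈ geom H v.length := by
  refine ⟨fun u hu => ?_, fun w hw => ?_⟩
  · by_cases hvu : v <+: u
    · obtain ⟨s, rfl⟩ := hvu
      obtain rfl : s = [] := by simpa using hu
      rw [delta_apply_append, apply_nil]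
    · exact delta_apply_of_not_prefix h hvu
  · by_cases hwv : w = v
    · rw [hwv, sect_delta_self]
      exact hh
    · have hvw : ¬ v <+: w := fun hp => hwv (hp.eq_of_length hw.symm).symm
      have hwv' : ¬ w <+: v := fun hp => hwv (hp.eq_of_length hw)
      rw [sect_delta_of_not_prefix h hvw hwv']
      exact one_mem H

end GeometricProduct

section MaxBranching

variable {D : ℕ} {P : Subgroup (FAut d D)}

lemma sect_mem_gft {g : TAut d} (hg : g ∈ gft d D P) (v : Vertex d) :
    sect g v ∈ gft d D P := fun w => by
  rw [sect_sect]
  exact hg (v ++ w)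

lemma mem_maxBranching {g : TAut d} :
    g ∈ maxBranching d D P ↔ g ∈ gft d D P ∧ ∀ v : Vertex d, delta d v g ∈ gft d D P :=
  Iff.rfl

lemma maxBranching_le_gft : maxBranching d D P ≤ gft d D P :=
  fun _ hg => hg.1

lemma gft_inf_lst_le_maxBranching (hD : 1 ≤ D) :
    gft d D P ⊓ lst d (D - 1) ≤ maxBranching d D P := by
  rintro g ⟨hg, hgl⟩
  refine ⟨hg, fun v w => ?_⟩
  by_cases hvw : v <+: w
  · obtain ⟨t, rfl⟩ := hvw
    rw [sect_delta_append]
    exact hg t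
  by_cases hwv : w <+: v
  · obtain ⟨u, rfl⟩ := hwv
    have hu : u ≠ [] := by
      rintro rfl
      simp at hvw
    have hlst : delta d u g ∈ lst d D :=
      lst_antitone (by have := List.length_pos_iff.mpr hu; omega) (delta_mem_lst hgl u)
    rw [sect_delta_prefix, proj_eq_one_iff.mpr hlst]
    exact one_mem P
  · rw [sect_delta_of_not_prefix g hvw hwv, map_one]
    exact one_mem P

lemma mem_maxBranching_iff_proj (hD : 1 ≤ D) (g : TAut d) :
    g ∈ maxBranching d D P ↔
      g ∈ gft d D P ∧ proj d D g ∈ (maxBranching d D P).map (proj d D) := by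
  refine ⟨fun hg => ⟨hg.1, g, hg, rfl⟩, ?_⟩
  rintro ⟨hg, k, hk, hkg⟩
  have hkg' : k⁻¹ * g ∈ maxBranching d D P :=
    gft_inf_lst_le_maxBranching hD <| Subgroup.mem_inf.mpr
      ⟨mul_mem (inv_mem (maxBranching_le_gft hk)) hg,
        lst_antitone (Nat.sub_le D 1) (proj_eq_proj_iff.mp hkg)⟩
  simpa using mul_mem hk hkg'

lemma maxBranching_eq_comap_inf_gft (hD : 1 ≤ D) :
    maxBranching d D P = ((maxBranching d D P).map (proj d D)).comap (proj d D) ⊓ gft d D P := by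
  ext g
  rw [mem_maxBranching_iff_proj hD, Subgroup.mem_inf, Subgroup.mem_comap, and_comm]

lemma relIndex_maxBranching_gft (hD : 1 ≤ D) (hmin : IsMinimalPattern d D P) :
    (maxBranching d D P).relIndex (gft d D P)
      = ((maxBranching d D P).map (proj d D)).relIndex P := by
  conv_lhs => rw [maxBranching_eq_comap_inf_gft hD]
  rw [Subgroup.inf_relIndex_right, Subgroup.relIndex_comap, hmin]

lemma isClopen_maxBranching (hD : 1 ≤ D) :
    IsClopen (Subtype.val ⁻¹' (maxBranching d D P : Set (TAut d)) : Set ↥(gft d D P)) := by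
  have h : (Subtype.val ⁻¹' (maxBranching d D P : Set (TAut d)) : Set ↥(gft d D P))
      = Subtype.val ⁻¹' {g | proj d D g ∈ ((maxBranching d D P).map (proj d D) : Set _)} := by
    ext g
    exact (mem_maxBranching_iff_proj hD g.1).trans (and_iff_right g.2)
  rw [h]
  exact (isClopen_setOf_proj_mem D _).preimage continuous_subtype_val

lemma geom_maxBranching_le : geom (maxBranching d D P) 1 ≤ maxBranching d D P := by
  rintro g ⟨hg1, hg2⟩
  rw [eq_prod_delta_sect_of_mem_lst_one hg1]
  refine ⟨list_prod_mem ?_, fun v => ?_⟩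
  · simp only [List.mem_map]
    rintro _ ⟨x, -, rfl⟩
    exact (mem_maxBranching.mp (hg2 [x] rfl)).2 [x]
  · rw [map_list_prod, List.map_map]
    refine list_prod_mem ?_
    simp only [List.mem_map, Function.comp_apply]
    rintro _ ⟨x, -, rfl⟩
    rw [delta_delta]
    exact (mem_maxBranching.mp (hg2 [x] rfl)).2 (v ++ [x])

lemma lst_inf_le_geom_maxBranching (hD : 1 ≤ D) :
    lst d D ⊓ maxBranching d D P ≤ geom (maxBranching d D P) 1 := by
  rintro g ⟨hgl, hgK⟩
  refine ⟨lst_antitone hD hgl, fun v hv => gft_inf_lst_le_maxBranching hD ?_⟩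
  refine Subgroup.mem_inf.mpr ⟨sect_mem_gft (maxBranching_le_gft hgK) v, ?_⟩
  simpa [hv] using sect_mem_lst hgl (v := v) (by omega)

lemma relIndex_geom_maxBranching_ne_zero (hD : 1 ≤ D) :
    (geom (maxBranching d D P) 1).relIndex (maxBranching d D P) ≠ 0 := by
  have h : (lst d D).relIndex (maxBranching d D P) ≠ 0 :=
    Subgroup.isFiniteRelIndex_of_finiteIndex.relIndex_ne_zero
  rw [← Subgroup.inf_relIndex_right] at h
  exact ne_zero_of_dvd_ne_zero h
    (Subgroup.relIndex_dvd_of_le_left _ (lst_inf_le_geom_maxBranching hD))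

lemma regularBranch_maxBranching (hD : 1 ≤ D) (hmin : IsMinimalPattern d D P) :
    RegularBranch (gft d D P) (maxBranching d D P) :=
  ⟨geom_maxBranching_le, maxBranching_le_gft,
    by rw [relIndex_maxBranching_gft hD hmin]; exact Subgroup.index_ne_zero_of_finite,
    relIndex_geom_maxBranching_ne_zero hD⟩

lemma le_maxBranching_of_geom_le {H : Subgroup (TAut d)} (hH : geom H 1 ≤ H)
    (hHG : H ≤ gft d D P) : H ≤ maxBranching d D P :=
  fun _ hh => ⟨hHG hh, fun v => hHG (geom_le_self hH v.length (delta_mem_geom hh v))⟩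

lemma maxBranching_normal_of_fractal (hfr : Fractal (gft d D P)) :
    ((maxBranching d D P).subgroupOf (gft d D P)).Normal := by
  rw [Subgroup.normal_subgroupOf_iff maxBranching_le_gft]
  intro k g hk hg
  refine ⟨mul_mem (mul_mem hg (maxBranching_le_gft hk)) (inv_mem hg), fun v => ?_⟩
  obtain ⟨c, hc, hcv, rfl⟩ := hfr.2.2 v g hg
  rw [← conj_delta_of_apply_eq hcv]
  exact mul_mem (mul_mem hc ((mem_maxBranching.mp hk).2 v)) (inv_mem hc)

end MaxBranching

/-- Properties of `K_P = {g ∈ G_P : δ_v(g) ∈ G_P for all v}` and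
`K̃_P = π_D(K_P)` for a minimal pattern subgroup `P ≤ Aut(T^D)`:
(1) `K_P` is a subgroup of `G_P`; (2) `St_{G_P}(D−1) ≤ K_P`;
(3) `K_P = {g ∈ G_P : π_D(g) ∈ K̃_P}`; (4) `[G_P : K_P] = [P : K̃_P]`;
(5) `K_P` is the maximal branching subgroup of `G_P`;
(6) `K_P` is clopen in `G_P` for the congruence topology;
(7) `K_P ⊴ G_P` iff `K̃_P ⊴ P`; (8) if `G_P` is fractal then `K_P ⊴ G_P`. -/
theorem statement_19 (d D : ℕ) (hD : 1 ≤ D) (P : Subgroup (FAut d D))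
    (hmin : IsMinimalPattern d D P) :
    -- (1) `K_P` is a subgroup of `G_P` (with the asserted carrier)
    ((maxBranching d D P : Set (TAut d))
        = {g : TAut d | g ∈ gft d D P ∧ ∀ v : Vertex d, delta d v g ∈ gft d D P} ∧
      maxBranching d D P ≤ gft d D P) ∧
    -- (2)
    gft d D P ⊓ lst d (D - 1) ≤ maxBranching d D P ∧
    -- (3)
    (∀ g : TAut d, g ∈ maxBranching d D P ↔
      g ∈ gft d D P ∧ proj d D g ∈ (maxBranching d D P).map (proj d D)) ∧
    -- (4)
    (maxBranching d D P).relIndex (gft d D P)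
      = ((maxBranching d D P).map (proj d D)).relIndex P ∧
    -- (5) `K_P` is the maximal branching subgroup
    (RegularBranch (gft d D P) (maxBranching d D P) ∧
      ∀ H : Subgroup (TAut d), geom H 1 ≤ H → H ≤ gft d D P →
        H.relIndex (gft d D P) ≠ 0 → (geom H 1).relIndex H ≠ 0 →
          H ≤ maxBranching d D P) ∧
    -- (6) clopen in `G_P`
    (IsClosed (Subtype.val ⁻¹' (maxBranching d D P : Set (TAut d)) :
        Set ↥(gft d D P)) ∧
      IsOpen (Subtype.val ⁻¹' (maxBranching d D P : Set (TAut d)) :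
        Set ↥(gft d D P))) ∧
    -- (7)
    (((maxBranching d D P).subgroupOf (gft d D P)).Normal ↔
      (((maxBranching d D P).map (proj d D)).subgroupOf P).Normal) ∧
    -- (8)
    (Fractal (gft d D P) → ((maxBranching d D P).subgroupOf (gft d D P)).Normal) := by
  refine ⟨⟨rfl, maxBranching_le_gft⟩, gft_inf_lst_le_maxBranching hD,
    mem_maxBranching_iff_proj hD, relIndex_maxBranching_gft hD hmin,
    ⟨regularBranch_maxBranching hD hmin, fun H hH hHG _ _ => le_maxBranching_of_geom_le hH hHG⟩,
    ⟨(isClopen_maxBranching hD).isClosed, (isClopen_maxBranching hD).isOpen⟩,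
    normal_subgroupOf_iff_map (proj d D) maxBranching_le_gft hmin
      fun g hg hgK => (mem_maxBranching_iff_proj hD g).mpr ⟨hg, hgK⟩,
    maxBranching_normal_of_fractal⟩

end TreeFT
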